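/- arXiv:1806.03937 — 3 statements merged into one kernel-verified Lean document; each statement's English description precedes it below -/
import Mathlib

section
/- Let μ be the stationary distribution of the boundary driven symmetric simple exclusion process on {0,1}^M. Then E_μ[σ(i)] = (M + 1/2 - i)/M for all i ∈ [M]. -/
def exch {M : ℕ} (σ : Fin M → Bool) (a b : Fin M) : Fin M → Bool :=
  Function.update (Function.update σ a (σ b)) b (σ a)

def flipAt {M : ℕ} (σ : Fin M → Bool) (a : Fin M) : Fin M → Bool :=
  Function.update σ a (!σ a)

/-- Generator of the boundary driven symmetric simple exclusion process on `{0,1}^M`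
(sites 1,…,M correspond to indices 0,…,M-1): symmetric exchanges at rate 1/2,
creation at site 1 at rate `1-σ(1)`, annihilation at site M at rate `σ(M)`. -/
noncomputable def bdGen (M : ℕ) (hM : 0 < M) (f : (Fin M → Bool) → ℝ)
    (σ : Fin M → Bool) : ℝ :=
  (∑ x : Fin M, if h : x.val + 1 < M then
      (1 / 2) * (f (exch σ x ⟨x.val + 1, h⟩) - f σ) else 0)
  + (if σ ⟨0, hM⟩ = false then 1 else 0) * (f (flipAt σ ⟨0, hM⟩) - f σ)
  + (if σ ⟨M - 1, by omega⟩ = true then 1 else 0) * (f (flipAt σ ⟨M - 1, by omega⟩) - f σ)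

/-!
Testing stationarity against the occupation of site `i` gives a conservation law: the mean
current into site `i` equals the mean current out of it, where the current across a bond is half
the density drop, the left reservoir injects `1 - ρ(1)` and the right end removes `ρ(M)`. So one
current `J` flows through the chain, the density drops by `2J` per bond from `ρ(1) = 1 - J` down
to `ρ(M) = J`, and this forces `J = 1 / (2M)`.
-/

open Finset

/-- Occupation number of site `n`, read as `0` for `n ≥ M`. -/
noncomputable def occ {M : ℕ} (σ : Fin M → Bool) (n : ℕ) : ℝ :=
  if h : n < M then (if σ ⟨n, h⟩ then 1 else 0) else 0

lemma occ_exch {M : ℕ} (σ : Fin M → Bool) (x : Fin M) (hx : x.val + 1 < M) (n : ℕ) :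
    occ (exch σ x ⟨x.val + 1, hx⟩) n = occ σ (Equiv.swap x.val (x.val + 1) n) := by
  rcases eq_or_ne n x.val with rfl | h1
  · simp [occ, exch, hx, Fin.ext_iff]
  rcases eq_or_ne n (x.val + 1) with rfl | h2
  · simp [occ, exch, hx]
  simp only [occ, exch, Equiv.swap_apply_of_ne_of_ne h1 h2]
  split_ifs <;> simp_all [Fin.ext_iff]

lemma occ_flipAt_sub {M : ℕ} (σ : Fin M → Bool) (a : Fin M) (n : ℕ) :
    occ (flipAt σ a) n - occ σ n = if n = a.val then 1 - 2 * occ σ n else 0 := by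
  rcases eq_or_ne n a.val with rfl | h
  · cases h : σ a <;> norm_num [occ, flipAt, h]
  · simp only [occ, flipAt, if_neg h]
    split_ifs <;> simp_all [Fin.ext_iff]

/-- The flux from site `n - 1` into site `n` of a density profile `η` on sites `0, …, M - 1`;
`n = 0` is the inflow from the left reservoir and `n = M` the outflow at the right end. -/
noncomputable def current (M : ℕ) (η : ℕ → ℝ) : ℕ → ℝ
  | 0 => 1 - η 0
  | n + 1 => if n + 1 < M then (η n - η (n + 1)) / 2 else η n

lemma half_occ_exch_sub {M : ℕ} (σ : Fin M → Bool) (x : Fin M) (hx : x.val + 1 < M) (n : ℕ) :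
    1 / 2 * (occ (exch σ x ⟨x.val + 1, hx⟩) n - occ σ n) =
      current M (occ σ) (x.val + 1) *
        ((if n = x.val + 1 then 1 else 0) - (if n = x.val then 1 else 0)) := by
  rw [occ_exch]
  rcases eq_or_ne n x.val with rfl | h1
  · simp [current, hx, mul_sub, div_eq_inv_mul]
  rcases eq_or_ne n (x.val + 1) with rfl | h2
  · simp [current, hx, mul_sub, div_eq_inv_mul]
  simp [Equiv.swap_apply_of_ne_of_ne h1 h2, h1, h2]

lemma bdGen_occ {M : ℕ} (hM : 0 < M) (σ : Fin M → Bool) {i : ℕ} (hi : i < M) :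
    bdGen M hM (fun τ => occ τ i) σ = current M (occ σ) i - current M (occ σ) (i + 1) := by
  set c := current M (occ σ)
  obtain ⟨k, rfl⟩ : ∃ k, M = k + 1 := ⟨M - 1, by omega⟩
  have hbonds : (∑ x : Fin (k + 1), if h : x.val + 1 < k + 1 then
      1 / 2 * (occ (exch σ x ⟨x.val + 1, h⟩) i - occ σ i) else 0) =
      (if i = 0 then 0 else c i) - (if i < k then c (i + 1) else 0) := by
    simp only [half_occ_exch_sub, dite_eq_ite]
    rw [Fin.sum_univ_eq_sum_range (fun x => if x + 1 < k + 1 then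
      c (x + 1) * ((if i = x + 1 then 1 else 0) - (if i = x then 1 else 0)) else 0),
      sum_range_succ, if_neg (lt_irrefl _), add_zero,
      sum_congr rfl fun x hx => if_pos (by simpa using hx)]
    simp only [mul_sub, mul_ite, mul_one, mul_zero, sum_sub_distrib, sum_ite_eq, mem_range]
    have h := sum_range_succ' (fun x => if i = x then c x else 0) k
    rw [sum_ite_eq, if_pos (mem_range.2 hi)] at h
    split_ifs at h ⊢ <;> subst_vars <;> linarith
  have hin : (if σ ⟨0, hM⟩ = false then 1 else 0) * (occ (flipAt σ ⟨0, hM⟩) i - occ σ i) =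
      if i = 0 then c 0 else 0 := by
    rw [occ_flipAt_sub]
    rcases eq_or_ne i 0 with rfl | h
    · simp only [c, current, occ, dif_pos hM, if_true]
      cases σ ⟨0, hM⟩ <;> norm_num
    · simp [h]
  have hout : (if σ ⟨k + 1 - 1, by omega⟩ = true then 1 else 0) *
      (occ (flipAt σ ⟨k + 1 - 1, by omega⟩) i - occ σ i) = -(if i = k then c (i + 1) else 0) := by
    rw [occ_flipAt_sub]
    rcases eq_or_ne i k with rfl | h
    · cases h : σ ⟨i, hi⟩ <;> norm_num [c, current, occ, h]
    · simp [h]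
  rw [bdGen, hbonds, hin, hout]
  split_ifs <;> first | omega | (subst_vars; ring)

lemma sum_mul_current {ι : Type*} [Fintype ι] (M : ℕ) (w : ι → ℝ) (hw : ∑ a, w a = 1)
    (η : ι → ℕ → ℝ) (n : ℕ) :
    ∑ a, w a * current M (η a) n = current M (fun k => ∑ a, w a * η a k) n := by
  cases n with
  | zero => simp [current, mul_sub, sum_sub_distrib, hw]
  | succ n =>
    simp only [current]
    split_ifs <;> simp [mul_div_assoc', mul_sub, sum_sub_distrib, ← sum_div]

lemma linear_profile_of_current_eq {M : ℕ} (hM : 0 < M) {r : ℕ → ℝ}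
    (hcons : ∀ n < M, current M r n = current M r (n + 1)) :
    ∀ n < M, r n = ((M : ℝ) + 1 / 2 - (n + 1)) / M := by
  set J := 1 - r 0 with hJ0
  have hJ : ∀ n ≤ M, current M r n = J := by
    intro n hn
    induction n with
    | zero => rfl
    | succ n ih => rw [← hcons n (by omega), ih (by omega)]
  have hlin : ∀ n < M, r n = r 0 - 2 * J * n := by
    intro n hn
    induction n with
    | zero => simp
    | succ n ih =>
      have h := hJ (n + 1) hn.le
      simp only [current, if_pos hn] at h
      push_cast
      linarith [ih (by omega)]
  have hexit : r (M - 1) = J := by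
    have h := hJ M le_rfl
    obtain ⟨k, rfl⟩ : ∃ k, M = k + 1 := ⟨M - 1, by omega⟩
    simpa [current] using h
  have hJM : 2 * J * M = 1 := by
    have h := hlin (M - 1) (by omega)
    rw [hexit, Nat.cast_sub hM] at h
    push_cast at h
    linarith
  intro n hn
  rw [hlin n hn]
  field_simp
  linear_combination (-(1 + 2 * (n : ℝ))) * hJM - 2 * (M : ℝ) * hJ0

theorem stmt5_general (M : ℕ) (hM : 0 < M) (μ : (Fin M → Bool) → ℝ)
    (hsum : ∑ σ, μ σ = 1)
    (hstat : ∀ f : (Fin M → Bool) → ℝ, ∑ σ, μ σ * bdGen M hM f σ = 0) :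
    ∀ i : Fin M,
      (∑ σ, μ σ * (if σ i = true then (1 : ℝ) else 0))
        = ((M : ℝ) + 1 / 2 - (i.val + 1)) / M := by
  set ρ : ℕ → ℝ := fun n => ∑ σ, μ σ * occ σ n
  have hcons : ∀ n < M, current M ρ n = current M ρ (n + 1) := by
    intro n hn
    have h := hstat (fun τ => occ τ n)
    simp only [bdGen_occ hM _ hn, mul_sub, sum_sub_distrib, sum_mul_current M μ hsum] at h
    linarith
  intro i
  simpa [ρ, occ] using linear_profile_of_current_eq hM hcons i i.isLt

/-- Linear density profile of the stationary distribution: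
`E_μ[σ(i)] = (M + 1/2 - i)/M` for all sites `i ∈ [M]`. -/
theorem stmt5 (M : ℕ) (hM : 0 < M) (μ : (Fin M → Bool) → ℝ)
    (hpos : ∀ σ, 0 ≤ μ σ) (hsum : ∑ σ, μ σ = 1)
    (hstat : ∀ f : (Fin M → Bool) → ℝ, ∑ σ, μ σ * bdGen M hM f σ = 0) :
    ∀ i : Fin M,
      (∑ σ, μ σ * (if σ i = true then (1 : ℝ) else 0))
        = ((M : ℝ) + 1 / 2 - (i.val + 1)) / M :=
  stmt5_general M hM μ hsum hstat
end

section
/- Let ρ̃ : {0,…,M+1} → ℝ satisfy |ρ̃(x+1) + ρ̃(x-1) - 2ρ̃(x)| ≤ 4c for all x ∈ [M], with ρ̃(M+1) = -ρ̃(M) and ρ̃(0) ≤ 2. Then ρ̃(M) ≤ 2cM + 2/(M+1). -/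
/-- If `ρ̃` has discrete Laplacian bounded by `4c` in absolute value on `[M]`, with
`ρ̃(M+1) = -ρ̃(M)` and `ρ̃(0) ≤ 2`, then `ρ̃(M) ≤ 2cM + 2/(M+1)`. -/
theorem stmt7 (M : ℕ) (hM : 1 ≤ M) (c : ℝ) (hc : 0 ≤ c) (ρ : ℕ → ℝ)
    (hlap : ∀ x, 1 ≤ x → x ≤ M → |ρ (x + 1) + ρ (x - 1) - 2 * ρ x| ≤ 4 * c)
    (hbd : ρ (M + 1) = -ρ M) (h0 : ρ 0 ≤ 2) :
    ρ M ≤ 2 * c * M + 2 / (M + 1) := by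
  set g : ℕ → ℝ := fun x => ρ x + 2 * c * ((x : ℝ) ^ 2 - ((M : ℝ) + 1) * x) with hg
  set d : ℕ → ℝ := fun x => g (x + 1) - g x with hd
  have step : ∀ k, k + 1 ≤ M → d k ≤ d (k + 1) := by
    intro k hk
    have h := hlap (k + 1) (by omega) hk
    have h' : -(4 * c) ≤ ρ (k + 1 + 1) + ρ (k + 1 - 1) - 2 * ρ (k + 1) := (abs_le.mp h).1
    simp only [Nat.add_sub_cancel] at h'
    simp only [hd, hg]
    push_cast
    nlinarith [h']
  have mono : ∀ j, j ≤ M → ∀ x, x ≤ j → d x ≤ d j := by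
    intro j
    induction j with
    | zero => intro _ x hx; have : x = 0 := by omega
              subst this; exact le_refl _
    | succ n ih =>
      intro hj x hx
      rcases Nat.lt_or_ge x (n + 1) with h | h
      · exact le_trans (ih (by omega) x (by omega)) (step n hj)
      · have : x = n + 1 := by omega
        subst this; exact le_refl _
  have tele : ∑ x ∈ Finset.range (M + 1), d x = g (M + 1) - g 0 :=
    Finset.sum_range_sub g (M + 1)
  have hsum : g (M + 1) - g 0 ≤ ((M : ℝ) + 1) * d M := by
    rw [← tele]
    have := Finset.sum_le_card_nsmul (Finset.range (M + 1)) d (d M)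
      (fun x hx => mono M le_rfl x (by have := Finset.mem_range.mp hx; omega))
    simpa [Finset.card_range, nsmul_eq_mul] using this
  have hg0 : g 0 = ρ 0 := by simp [hg]
  have hgM1 : g (M + 1) = ρ (M + 1) := by
    simp only [hg]
    push_cast
    ring
  have hgM : g M = ρ M - 2 * c * M := by
    simp only [hg]
    ring
  have key : (-ρ M) - ρ 0 ≤ ((M : ℝ) + 1) * ((-ρ M) - (ρ M - 2 * c * M)) := by
    have : d M = g (M + 1) - g M := rfl
    rw [this, hgM1, hbd, hgM] at hsum
    rw [hg0] at hsum
    linarith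
  have hm1 : (1 : ℝ) ≤ (M : ℝ) := by exact_mod_cast hM
  have hpos : (0 : ℝ) < (M : ℝ) + 1 := by linarith
  rw [show 2 * c * (M : ℝ) + 2 / ((M : ℝ) + 1) = (2 * c * M * ((M:ℝ)+1) + 2) / ((M:ℝ)+1) by
    field_simp, le_div_iff₀ hpos]
  rcases le_or_gt (ρ M) 0 with hneg | hpos'
  · nlinarith [mul_nonneg hc (by linarith : (0:ℝ) ≤ (M:ℝ))]
  · nlinarith [mul_nonneg (by linarith : (0:ℝ) ≤ (M:ℝ)) hpos'.le]
end

section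
/- Let ω(x), x ∈ [N], be i.i.d. (0,1)-valued with E[(1-ω(1))/ω(1)] < 1. Then there exist constants c > 0 and 0 < r < 1 such that P( max over j ≤ N/4, l ≥ N/2 of ∏_{x=j+1}^{l} (1-ω(x+1))/ω(x) > e^{-cN} ) ≤ r^N for all N large, i.e. the maximum over such products is exponentially small in N with probability tending to 1 exponentially fast. -/
/-!
With `ρ x = (1 - ω x) / ω x`, shifting the numerators gives
`∏_{x=j+1}^{l} (1 - ω (x+1)) / ω x = ω(j+1)⁻¹ · ∏_{x=j+2}^{l} ρ x · (1 - ω (l+1))`.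
Since `ω(j+1)⁻¹ = ρ (j+1) + 1` and `0 ≤ 1 - ω (l+1) ≤ 1`, the product is at most a sum of two
products of independent copies of `ρ`, of mean `m ^ (l-j) + m ^ (l-j-1)` where `m = E[ρ] < 1`.
Markov's inequality therefore bounds the probability for one pair `(j, l)` by a geometric term in
`l - j ≥ N / 4`, and the union bound over the at most `(N+1)²` pairs costs only a polynomial factor.
-/

open MeasureTheory ProbabilityTheory Finset Filter Topology Real

lemma prod_Icc_one_sub_succ_div {K : Type*} [Field K] (a : ℕ → K) {j l : ℕ} (hjl : j < l) :
    ∏ x ∈ Icc (j + 1) l, (1 - a (x + 1)) / a x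
      = (a (j + 1))⁻¹ * (∏ x ∈ Ioc (j + 1) l, (1 - a x) / a x) * (1 - a (l + 1)) := by
  induction l, Nat.succ_le_of_lt hjl using Nat.le_induction with
  | base => simp [div_eq_mul_inv, mul_comm]
  | succ l hl ih =>
    rw [prod_Icc_succ_top (by omega), ih (by omega), prod_Ioc_succ_top hl]
    ring

lemma prod_Icc_one_sub_succ_div_le {a : ℕ → ℝ} (ha : ∀ x, 0 < a x ∧ a x < 1) {j l : ℕ}
    (hjl : j < l) :
    ∏ x ∈ Icc (j + 1) l, (1 - a (x + 1)) / a x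
      ≤ ∏ x ∈ Icc (j + 1) l, (1 - a x) / a x + ∏ x ∈ Ioc (j + 1) l, (1 - a x) / a x := by
  have hρ x : 0 ≤ (1 - a x) / a x := div_nonneg (by linarith [ha x]) (ha x).1.le
  have hinv : (a (j + 1))⁻¹ = (1 - a (j + 1)) / a (j + 1) + 1 := by
    field_simp [(ha (j + 1)).1.ne']
    ring
  rw [prod_Icc_one_sub_succ_div a hjl, ← mul_prod_Ioc_eq_prod_Icc (by omega), hinv]
  calc _ ≤ ((1 - a (j + 1)) / a (j + 1) + 1) * ∏ x ∈ Ioc (j + 1) l, (1 - a x) / a x :=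
        mul_le_of_le_one_right
          (mul_nonneg (by linarith [hρ (j + 1)]) (prod_nonneg fun x _ => hρ x))
          (by linarith [ha (l + 1)])
    _ = _ := by ring

lemma exists_pos_le_exp_neg {m : ℝ} (h0 : 0 ≤ m) (h1 : m < 1) : ∃ δ > 0, m ≤ exp (-δ) := by
  refine ⟨-log ((1 + m) / 2), neg_pos.2 (log_neg (by linarith) (by linarith)), ?_⟩
  rw [neg_neg, exp_log (by linarith)]
  linarith

lemma pow_add_pow_pred_div_exp_le {m δ : ℝ} (hm0 : 0 ≤ m) (hm : m ≤ exp (-δ)) (hδ : 0 < δ)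
    {k N : ℕ} (hk : 1 ≤ k) (hN : N ≤ 4 * k) :
    (m ^ k + m ^ (k - 1)) / exp (-(δ / 8 * N)) ≤ 2 * exp δ * exp (-(δ / 8)) ^ N := by
  have hm1 : m ≤ 1 := hm.trans (exp_le_one_iff.2 (by linarith))
  have hsum : m ^ k + m ^ (k - 1) ≤ 2 * exp (-δ) ^ (k - 1) := by
    have h1 : m ^ k ≤ m ^ (k - 1) := pow_le_pow_of_le_one hm0 hm1 (Nat.sub_le k 1)
    have h2 : m ^ (k - 1) ≤ exp (-δ) ^ (k - 1) := pow_le_pow_left₀ hm0 hm _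
    linarith
  have hNk : (N : ℝ) ≤ 4 * k := by exact_mod_cast hN
  calc (m ^ k + m ^ (k - 1)) / exp (-(δ / 8 * N))
      ≤ 2 * exp (-δ) ^ (k - 1) / exp (-(δ / 8 * N)) := by gcongr
    _ = 2 * exp (δ - δ * k + δ / 8 * N) := by
        rw [← exp_nat_mul, Nat.cast_sub hk, mul_div_assoc, ← exp_sub]
        ring_nf
    _ ≤ 2 * exp (δ - δ / 8 * N) := by gcongr; nlinarith
    _ = 2 * exp δ * exp (-(δ / 8)) ^ N := by
        rw [← exp_nat_mul, mul_assoc, ← exp_add]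
        ring_nf

lemma eventually_mul_sq_mul_pow_le_pow {C q r : ℝ} (hq : 0 < q) (hqr : q < r) :
    ∀ᶠ N : ℕ in atTop, C * ((N : ℝ) + 1) ^ 2 * q ^ N ≤ r ^ N := by
  have hr : 0 < r := hq.trans hqr
  have ht : |q / r| < 1 := by
    rw [abs_of_pos (div_pos hq hr)]
    exact (div_lt_one hr).2 hqr
  have hlim : Tendsto (fun N : ℕ => C / (q / r) * (((N + 1 : ℕ) : ℝ) ^ 2 * (q / r) ^ (N + 1)))
      atTop (𝓝 0) := by
    simpa using ((tendsto_pow_const_mul_const_pow_of_abs_lt_one 2 ht).comp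
      (tendsto_add_atTop_nat 1)).const_mul (C / (q / r))
  filter_upwards [hlim.eventually (eventually_le_nhds one_pos)] with N hN
  have hqr' : q ^ N = (q / r) ^ N * r ^ N := by rw [← mul_pow, div_mul_cancel₀ _ hr.ne']
  calc C * ((N : ℝ) + 1) ^ 2 * q ^ N
      = C / (q / r) * (((N + 1 : ℕ) : ℝ) ^ 2 * (q / r) ^ (N + 1)) * r ^ N := by
        rw [hqr', pow_succ (q / r) N]
        push_cast
        field_simp
    _ ≤ 1 * r ^ N := by gcongr
    _ = r ^ N := one_mul _

section Probability

variable {Ω : Type*} [MeasurableSpace Ω] {μ : Measure Ω}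

lemma iIndepFun.integrable_finset_prod {ι : Type*} {Y : ι → Ω → ℝ} (hY : iIndepFun Y μ)
    (hm : ∀ i, Measurable (Y i)) {s : Finset ι} (hint : ∀ i ∈ s, Integrable (Y i) μ) :
    Integrable (fun ω => ∏ i ∈ s, Y i ω) μ := by
  have := hY.isProbabilityMeasure
  induction s using Finset.cons_induction with
  | empty => simp
  | cons i s hi ih =>
    have ih := ih fun k hk => hint k (mem_cons_of_mem hk)
    rw [← prod_fn] at ih ⊢
    rw [prod_cons, mul_comm]
    exact (hY.indepFun_finsetProd_of_notMem hm hi).integrable_mul ih (hint i (mem_cons_self i s))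

lemma iIndepFun.integral_finset_prod {ι : Type*} {Y : ι → Ω → ℝ} (hY : iIndepFun Y μ)
    (hm : ∀ i, AEStronglyMeasurable (Y i) μ) (s : Finset ι) :
    ∫ ω, ∏ i ∈ s, Y i ω ∂μ = ∏ i ∈ s, ∫ ω, Y i ω ∂μ := by
  simp_rw [← prod_coe_sort s]
  exact (hY.precomp (g := ((↑) : s → ι)) Subtype.val_injective).integral_fun_prod_eq_prod_integral
    fun i => hm i

section IdentDistrib

variable {ι β : Type*} [MeasurableSpace β] {X : ι → Ω → β} {i₀ : ι} {f : β → ℝ}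

lemma integrable_finset_prod_comp_of_identDistrib (hX : iIndepFun X μ)
    (hm : ∀ i, Measurable (X i)) (hf : Measurable f)
    (hident : ∀ i, IdentDistrib (X i) (X i₀) μ μ)
    (hint : Integrable (fun ω => f (X i₀ ω)) μ) (s : Finset ι) :
    Integrable (fun ω => ∏ i ∈ s, f (X i ω)) μ :=
  iIndepFun.integrable_finset_prod (hX.comp (fun _ => f) fun _ => hf)
    (fun i => hf.comp (hm i)) fun i _ => ((hident i).comp hf).integrable_iff.mpr hint

lemma integral_finset_prod_comp_of_identDistrib (hX : iIndepFun X μ)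
    (hm : ∀ i, Measurable (X i)) (hf : Measurable f)
    (hident : ∀ i, IdentDistrib (X i) (X i₀) μ μ) (s : Finset ι) :
    ∫ ω, ∏ i ∈ s, f (X i ω) ∂μ = (∫ ω, f (X i₀ ω) ∂μ) ^ #s := by
  rw [iIndepFun.integral_finset_prod (Y := fun i ω => f (X i ω))
    (hX.comp (fun _ => f) fun _ => hf) (fun i => (hf.comp (hm i)).aestronglyMeasurable),
    ← prod_const]
  exact prod_congr rfl fun i _ => ((hident i).comp hf).integral_eq

end IdentDistrib

lemma measureReal_exists_pair_le [IsFiniteMeasure μ] {N : ℕ} {P : ℕ → ℕ → Prop}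
    (hP : ∀ j l, P j l → j ≤ N ∧ l ≤ N)
    {A : ℕ → ℕ → Set Ω} {B : ℝ} (hB : 0 ≤ B) (hA : ∀ j l, P j l → μ.real (A j l) ≤ B) :
    μ.real {w | ∃ j l, P j l ∧ w ∈ A j l} ≤ (N + 1) ^ 2 * B := by
  classical
  set S := (range (N + 1) ×ˢ range (N + 1)).filter fun p => P p.1 p.2
  have hsub : {w | ∃ j l, P j l ∧ w ∈ A j l} ⊆ ⋃ p ∈ S, A p.1 p.2 := by
    rintro w ⟨j, l, hjl, hw⟩
    have := hP j l hjl
    exact Set.mem_biUnion (x := (j, l)) (by simp [S, hjl]; omega) hw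
  have hcard : (#S : ℝ) ≤ (N + 1) ^ 2 := by
    have : #S ≤ (N + 1) ^ 2 := (card_filter_le _ _).trans (by simp [sq])
    exact_mod_cast this
  calc μ.real {w | ∃ j l, P j l ∧ w ∈ A j l}
      ≤ ∑ p ∈ S, μ.real (A p.1 p.2) :=
        (measureReal_mono hsub (measure_ne_top _ _)).trans (measureReal_biUnion_finset_le S _)
    _ ≤ ∑ _p ∈ S, B := sum_le_sum fun p hp => hA p.1 p.2 (mem_filter.1 hp).2
    _ = #S * B := by rw [sum_const, nsmul_eq_mul]
    _ ≤ (N + 1) ^ 2 * B := by gcongr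

lemma measureReal_lt_prod_one_sub_succ_div_le {X : ℕ → Ω → ℝ} (hmeas : ∀ n, Measurable (X n))
    (hindep : iIndepFun X μ) (hident : ∀ n, IdentDistrib (X n) (X 1) μ μ)
    (hval : ∀ n, ∀ᵐ w ∂μ, 0 < X n w ∧ X n w < 1)
    (hint : Integrable (fun w => (1 - X 1 w) / X 1 w) μ) {j l : ℕ} (hjl : j < l) {ε : ℝ}
    (hε : 0 < ε) :
    μ.real {w | ε < ∏ x ∈ Icc (j + 1) l, (1 - X (x + 1) w) / X x w}
      ≤ ((∫ w, (1 - X 1 w) / X 1 w ∂μ) ^ (l - j)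
          + (∫ w, (1 - X 1 w) / X 1 w ∂μ) ^ (l - j - 1)) / ε := by
  have := hindep.isProbabilityMeasure
  have hf : Measurable fun t : ℝ => (1 - t) / t := by fun_prop
  have hP_int := integrable_finset_prod_comp_of_identDistrib hindep hmeas hf hident hint
  have hP_eq := integral_finset_prod_comp_of_identDistrib hindep hmeas hf hident
  set G : Ω → ℝ := fun w =>
    ∏ x ∈ Icc (j + 1) l, (1 - X x w) / X x w + ∏ x ∈ Ioc (j + 1) l, (1 - X x w) / X x w
  have hFG : ∀ᵐ w ∂μ, ∏ x ∈ Icc (j + 1) l, (1 - X (x + 1) w) / X x w ≤ G w := by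
    filter_upwards [ae_all_iff.2 hval] with w hw using prod_Icc_one_sub_succ_div_le hw hjl
  have hG : 0 ≤ᵐ[μ] G := by
    filter_upwards [ae_all_iff.2 hval] with w hw
    have hρ x : 0 ≤ (1 - X x w) / X x w := div_nonneg (by linarith [hw x]) (hw x).1.le
    exact add_nonneg (prod_nonneg fun x _ => hρ x) (prod_nonneg fun x _ => hρ x)
  calc μ.real {w | ε < ∏ x ∈ Icc (j + 1) l, (1 - X (x + 1) w) / X x w}
      ≤ μ.real {w | ε ≤ G w} :=
        ENNReal.toReal_mono (measure_ne_top _ _)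
          (measure_mono_ae (hFG.mono fun w hw h => h.le.trans hw))
    _ ≤ (∫ w, G w ∂μ) / ε := by
        rw [le_div_iff₀ hε, mul_comm]
        exact mul_meas_ge_le_integral_of_nonneg hG ((hP_int _).add (hP_int _)) ε
    _ = _ := by
        rw [integral_add (hP_int _) (hP_int _), hP_eq, hP_eq, Nat.card_Icc, Nat.card_Ioc,
          Nat.sub_sub, Nat.add_sub_add_right]

end Probability

/-- For i.i.d. `(0,1)`-valued environment variables with `E[(1-ω)/ω] < 1`, the maximum
over `j ≤ N/4`, `N/2 ≤ l ≤ N` of `∏_{x=j+1}^{l} (1-ω(x+1))/ω(x)` exceeds `e^{-cN}`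
with probability at most `r^N`: the maximum is exponentially small in `N`, with
probability tending to one exponentially fast. -/
theorem stmt17 {Ω : Type*} [MeasurableSpace Ω] (μ : Measure Ω) [IsProbabilityMeasure μ]
    (X : ℕ → Ω → ℝ) (hmeas : ∀ n, Measurable (X n))
    (hindep : iIndepFun X μ)
    (hident : ∀ n, IdentDistrib (X n) (X 1) μ μ)
    (hval : ∀ n, ∀ᵐ w ∂μ, 0 < X n w ∧ X n w < 1)
    (hint : Integrable (fun w => (1 - X 1 w) / X 1 w) μ)
    (hdrift : ∫ w, (1 - X 1 w) / X 1 w ∂μ < 1) :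
    ∃ c > (0 : ℝ), ∃ r : ℝ, 0 < r ∧ r < 1 ∧ ∃ N₀ : ℕ, ∀ N ≥ N₀,
      (μ {w | ∃ j l : ℕ, 4 * j ≤ N ∧ N ≤ 2 * l ∧ l ≤ N ∧ j < l ∧
          Real.exp (-(c * N)) <
            ∏ x ∈ Finset.Icc (j + 1) l, (1 - X (x + 1) w) / X x w}).toReal
        ≤ r ^ N := by
  set m := ∫ w, (1 - X 1 w) / X 1 w ∂μ
  have hm0 : 0 ≤ m := integral_nonneg_of_ae <| (hval 1).mono fun w hw =>
    div_nonneg (by linarith [hw.2]) hw.1.le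
  obtain ⟨δ, hδ, hmδ⟩ := exists_pos_le_exp_neg hm0 hdrift
  obtain ⟨N₀, hN₀⟩ := eventually_atTop.1 <| eventually_mul_sq_mul_pow_le_pow (C := 2 * exp δ)
    (exp_pos (-(δ / 8))) (exp_lt_exp.2 (by linarith : -(δ / 8) < -(δ / 16)))
  refine ⟨δ / 8, by positivity, exp (-(δ / 16)), exp_pos _, exp_lt_one_iff.2 (by linarith), N₀,
    fun N hN => ?_⟩
  calc μ.real _ ≤ μ.real {w | ∃ j l, (4 * j ≤ N ∧ N ≤ 2 * l ∧ l ≤ N ∧ j < l) ∧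
          w ∈ {w | exp (-(δ / 8 * N)) < ∏ x ∈ Icc (j + 1) l, (1 - X (x + 1) w) / X x w}} :=
        measureReal_mono <| by
          rintro w ⟨j, l, h₁, h₂, h₃, h₄, h₅⟩
          exact ⟨j, l, ⟨h₁, h₂, h₃, h₄⟩, h₅⟩
    _ ≤ ((N : ℝ) + 1) ^ 2 * (2 * exp δ * exp (-(δ / 8)) ^ N) :=
        measureReal_exists_pair_le (fun j l h => ⟨by omega, h.2.2.1⟩) (by positivity)
          fun j l h => by
            obtain ⟨h₁, h₂, -, hjl⟩ := h
            exact (measureReal_lt_prod_one_sub_succ_div_le hmeas hindep hident hval hint hjl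
              (exp_pos _)).trans (pow_add_pow_pred_div_exp_le hm0 hmδ hδ (by omega) (by omega))
    _ = 2 * exp δ * ((N : ℝ) + 1) ^ 2 * exp (-(δ / 8)) ^ N := by ring
    _ ≤ exp (-(δ / 16)) ^ N := hN₀ N hN
end
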